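/- arXiv:2410.19957 — 4 statements merged into one kernel-verified Lean document; each statement's English description precedes it below -/
import Mathlib

section
/- In the finite Hecke algebra of type C_2 over the field K = C(t^{1/2}, t_2^{1/2}), the element ε_± = T_1 T_2 T_1 T_2 + t^{-1/2} T_2 T_1 T_2 - t_2^{1/2} T_1 T_2 T_1 - t^{-1/2} t_2^{1/2} T_1 T_2 - t^{-1/2} t_2^{1/2} T_2 T_1 - t^{-1} t_2^{1/2} T_2 + t^{-1/2} t_2 T_1 + t^{-1} t_2 satisfies T_1 ε_± = t^{1/2} ε_± and T_2 ε_± = -t_2^{-1/2} ε_±. -/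
/-- In the finite Hecke algebra of type C_2 (any K-algebra with elements T_1, T_2
satisfying the quadratic and braid relations, with s = t^{1/2} and u = t_2^{1/2}),
the mesonic symmetrizer ε_± satisfies T_1 ε_± = t^{1/2} ε_± and T_2 ε_± = -t_2^{-1/2} ε_±. -/
theorem mesonic_symmetrizer_eigen {K : Type*} [Field K] {A : Type*} [Ring A] [Algebra K A]
    (s u : K) (hs : s ≠ 0) (hu : u ≠ 0) (T1 T2 : A)
    (hT1 : (T1 - s • (1 : A)) * (T1 + s⁻¹ • (1 : A)) = 0)
    (hT2 : (T2 - u • (1 : A)) * (T2 + u⁻¹ • (1 : A)) = 0)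
    (hbraid : T1 * T2 * T1 * T2 = T2 * T1 * T2 * T1)
    (eps : A)
    (heps : eps = T1 * T2 * T1 * T2 + s⁻¹ • (T2 * T1 * T2) - u • (T1 * T2 * T1)
        - (s⁻¹ * u) • (T1 * T2) - (s⁻¹ * u) • (T2 * T1)
        - (s⁻¹ * s⁻¹ * u) • T2 + (s⁻¹ * u * u) • T1 + (s⁻¹ * s⁻¹ * u * u) • (1 : A)) :
    T1 * eps = s • eps ∧ T2 * eps = (-u⁻¹) • eps := by
  have key1 : (T1 - s • (1:A)) * (T1 + s⁻¹ • (1:A)) = T1 * T1 - (s - s⁻¹) • T1 - 1 := by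
    simp only [sub_mul, mul_add, smul_mul_assoc, mul_smul_comm, one_mul, mul_one, smul_smul]
    match_scalars <;> field_simp <;> try ring
  have h1 : T1 * T1 = (s - s⁻¹) • T1 + 1 := by
    have h : T1 * T1 - (s - s⁻¹) • T1 - 1 = 0 := by rw [← key1]; exact hT1
    rw [← sub_eq_zero]
    calc T1 * T1 - ((s - s⁻¹) • T1 + 1) = T1 * T1 - (s - s⁻¹) • T1 - 1 := by abel
      _ = 0 := h
  have key2 : (T2 - u • (1:A)) * (T2 + u⁻¹ • (1:A)) = T2 * T2 - (u - u⁻¹) • T2 - 1 := by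
    simp only [sub_mul, mul_add, smul_mul_assoc, mul_smul_comm, one_mul, mul_one, smul_smul]
    match_scalars <;> field_simp <;> try ring
  have h2 : T2 * T2 = (u - u⁻¹) • T2 + 1 := by
    have h : T2 * T2 - (u - u⁻¹) • T2 - 1 = 0 := by rw [← key2]; exact hT2
    rw [← sub_eq_zero]
    calc T2 * T2 - ((u - u⁻¹) • T2 + 1) = T2 * T2 - (u - u⁻¹) • T2 - 1 := by abel
      _ = 0 := h
  have h1' : ∀ x : A, T1 * (T1 * x) = (s - s⁻¹) • (T1 * x) + x := by
    intro x
    rw [← mul_assoc, h1, add_mul, smul_mul_assoc, one_mul]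
  have h2' : ∀ x : A, T2 * (T2 * x) = (u - u⁻¹) • (T2 * x) + x := by
    intro x
    rw [← mul_assoc, h2, add_mul, smul_mul_assoc, one_mul]
  have hb : T1 * (T2 * (T1 * T2)) = T2 * (T1 * (T2 * T1)) := by
    simpa only [mul_assoc] using hbraid
  constructor
  · rw [heps]
    simp only [mul_add, mul_sub, mul_smul_comm, mul_one, mul_assoc]
    simp only [h1']
    simp only [h1]
    match_scalars
    all_goals try ring
    all_goals field_simp
    all_goals try ring
    all_goals tauto
  · rw [heps]
    simp only [mul_add, mul_sub, mul_smul_comm, mul_one, mul_assoc]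
    simp only [hb]
    simp only [h2']
    simp only [h2]
    simp only [← hb]
    match_scalars
    all_goals try ring
    all_goals field_simp
    all_goals try ring
    all_goals tauto
end

section
/- In the finite Hecke algebra of type C_2, the mesonic symmetrizer admits both factorizations: ε_± = (T_1 + t^{-1/2})(T_2 T_1 - t^{-1/2} t_2^{1/2})(T_2 - t_2^{1/2}) = (T_2 - t_2^{1/2})(T_1 T_2 - t^{-1/2} t_2^{1/2})(T_1 + t^{-1/2}). -/
/-- The type C_2 mesonic symmetrizer admits the two triple-product factorizations
ε_± = (T_1 + t^{-1/2})(T_2 T_1 - t^{-1/2} t_2^{1/2})(T_2 - t_2^{1/2})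
    = (T_2 - t_2^{1/2})(T_1 T_2 - t^{-1/2} t_2^{1/2})(T_1 + t^{-1/2}). -/
theorem mesonic_symmetrizer_factorization {K : Type*} [Field K] {A : Type*} [Ring A]
    [Algebra K A]
    (s u : K) (hs : s ≠ 0) (hu : u ≠ 0) (T1 T2 : A)
    (hT1 : (T1 - s • (1 : A)) * (T1 + s⁻¹ • (1 : A)) = 0)
    (hT2 : (T2 - u • (1 : A)) * (T2 + u⁻¹ • (1 : A)) = 0)
    (hbraid : T1 * T2 * T1 * T2 = T2 * T1 * T2 * T1)
    (eps : A)
    (heps : eps = T1 * T2 * T1 * T2 + s⁻¹ • (T2 * T1 * T2) - u • (T1 * T2 * T1)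
        - (s⁻¹ * u) • (T1 * T2) - (s⁻¹ * u) • (T2 * T1)
        - (s⁻¹ * s⁻¹ * u) • T2 + (s⁻¹ * u * u) • T1 + (s⁻¹ * s⁻¹ * u * u) • (1 : A)) :
    eps = (T1 + s⁻¹ • (1 : A)) * (T2 * T1 - (s⁻¹ * u) • (1 : A)) * (T2 - u • (1 : A)) ∧
    eps = (T2 - u • (1 : A)) * (T1 * T2 - (s⁻¹ * u) • (1 : A)) * (T1 + s⁻¹ • (1 : A)) := by
  subst heps
  refine ⟨?_, ?_⟩
  · noncomm_ring; module
  · rw [hbraid]; noncomm_ring; module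
end

section
/- In the finite Hecke algebra of type C_2, the mesonic symmetrizer ε_± satisfies ε_±^2 = t^{-1} t_2 W_0(t, t_2^{-1}) ε_±, where W_0(t, t_2) = (1 + t_2)(1 + t)(1 + t t_2). -/
set_option maxHeartbeats 1000000 in
/-- The type C_2 mesonic symmetrizer satisfies
ε_±² = t^{-1} t_2 W_0(t, t_2^{-1}) ε_± where W_0(t,t_2) = (1+t_2)(1+t)(1+t t_2),
with t = s², t_2 = u². -/
theorem mesonic_symmetrizer_square {K : Type*} [Field K] {A : Type*} [Ring A] [Algebra K A]
    (s u : K) (hs : s ≠ 0) (hu : u ≠ 0) (T1 T2 : A)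
    (hT1 : (T1 - s • (1 : A)) * (T1 + s⁻¹ • (1 : A)) = 0)
    (hT2 : (T2 - u • (1 : A)) * (T2 + u⁻¹ • (1 : A)) = 0)
    (hbraid : T1 * T2 * T1 * T2 = T2 * T1 * T2 * T1)
    (eps : A)
    (heps : eps = T1 * T2 * T1 * T2 + s⁻¹ • (T2 * T1 * T2) - u • (T1 * T2 * T1)
        - (s⁻¹ * u) • (T1 * T2) - (s⁻¹ * u) • (T2 * T1)
        - (s⁻¹ * s⁻¹ * u) • T2 + (s⁻¹ * u * u) • T1 + (s⁻¹ * s⁻¹ * u * u) • (1 : A)) :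
    eps * eps
      = ((s ^ 2)⁻¹ * u ^ 2 *
          ((1 + (u ^ 2)⁻¹) * (1 + s ^ 2) * (1 + s ^ 2 * (u ^ 2)⁻¹))) • eps := by
  have hss : s * s⁻¹ = 1 := mul_inv_cancel₀ hs
  have huu : u * u⁻¹ = 1 := mul_inv_cancel₀ hu
  -- quadratic relations in normalized form
  have h1' : T1 * T1 = (s - s⁻¹) • T1 + 1 := by
    have h : T1 * T1 + (s⁻¹ - s) • T1 - (s * s⁻¹) • (1 : A) = 0 := by
      rw [← hT1]
      simp only [mul_add, sub_mul, smul_mul_assoc, mul_smul_comm, smul_smul, mul_one, one_mul]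
      module
    rw [hss] at h
    linear_combination (norm := module) h
  have h2' : T2 * T2 = (u - u⁻¹) • T2 + 1 := by
    have h : T2 * T2 + (u⁻¹ - u) • T2 - (u * u⁻¹) • (1 : A) = 0 := by
      rw [← hT2]
      simp only [mul_add, sub_mul, smul_mul_assoc, mul_smul_comm, smul_smul, mul_one, one_mul]
      module
    rw [huu] at h
    linear_combination (norm := module) h
  have h1 : ∀ x : A, T1 * (T1 * x) = (s - s⁻¹) • (T1 * x) + x := by
    intro x
    rw [← mul_assoc, h1', add_mul, smul_mul_assoc, one_mul]
  have h2 : ∀ x : A, T2 * (T2 * x) = (u - u⁻¹) • (T2 * x) + x := by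
    intro x
    rw [← mul_assoc, h2', add_mul, smul_mul_assoc, one_mul]
  have br : ∀ x : A, T1 * (T2 * (T1 * (T2 * x))) = T2 * (T1 * (T2 * (T1 * x))) := by
    intro x
    calc T1 * (T2 * (T1 * (T2 * x))) = T1 * T2 * T1 * T2 * x := by
          simp only [mul_assoc]
      _ = T2 * T1 * T2 * T1 * x := by rw [hbraid]
      _ = T2 * (T1 * (T2 * (T1 * x))) := by simp only [mul_assoc]
  have br' : T1 * (T2 * (T1 * T2)) = T2 * (T1 * (T2 * T1)) := by
    simpa only [mul_assoc] using hbraid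
  -- eigen-equations for right multiplication
  have e1 : eps * T1 = s • eps := by
    rw [heps]
    simp only [add_mul, sub_mul, smul_mul_assoc, smul_add, smul_sub, smul_smul, mul_assoc,
      one_mul, mul_one, h1, h1', h2, h2', br, br', mul_add, mul_sub, mul_smul_comm,
      mul_one, smul_add, smul_sub, smul_smul]
    match_scalars <;>
      first
      | ring1
      | (field_simp; done)
      | (field_simp; ring1)
      | (field_simp; ring_nf; field_simp; ring1)
      | (field_simp; left; ring1)
      | (field_simp; tauto)
  have e2 : eps * T2 = (-u⁻¹) • eps := by
    rw [heps]
    simp only [add_mul, sub_mul, smul_mul_assoc, smul_add, smul_sub, smul_smul, mul_assoc,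
      one_mul, mul_one, h1, h1', h2, h2', br, br', mul_add, mul_sub, mul_smul_comm,
      mul_one, smul_add, smul_sub, smul_smul, neg_smul, neg_add_rev, neg_sub, neg_neg]
    match_scalars <;>
      first
      | ring1
      | (field_simp; done)
      | (field_simp; ring1)
      | (field_simp; ring_nf; field_simp; ring1)
      | (field_simp; left; ring1)
      | (field_simp; tauto)
  have e1x : ∀ x : A, eps * (T1 * x) = s • (eps * x) := by
    intro x
    rw [← mul_assoc, e1, smul_mul_assoc]
  have e2x : ∀ x : A, eps * (T2 * x) = (-u⁻¹) • (eps * x) := by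
    intro x
    rw [← mul_assoc, e2, smul_mul_assoc]
  nth_rewrite 2 [heps]
  simp only [mul_add, mul_sub, mul_smul_comm, mul_assoc, mul_one, e1x, e2x, e1, e2,
    smul_smul, smul_add, smul_sub, neg_smul, neg_neg]
  match_scalars <;>
      first
      | ring1
      | (field_simp; done)
      | (field_simp; ring1)
      | (field_simp; ring_nf; field_simp; ring1)
      | (field_simp; left; ring1)
      | (field_simp; tauto)
end

section
/- Telescoping identity for the Poincaré polynomial evaluation: for invertible parameters t, t_0, t_n with all denominators nonzero, \prod_{1 \le i < j \le n} \frac{(1 - t^{j-i+1})(1 - t^{2n-j-i+1} t_n t_0)}{(1 - t^{j-i})(1 - t^{2n-j-i} t_n t_0)} \cdot \prod_{i=1}^n \frac{(1 - t_n t_0 t^{n-i})(1 + t_n t^{n-i})}{(1 - t_0 t_n t^{2(n-i)})} = \prod_{i=1}^n \frac{(1 - t^i)(1 + t_n t^{i-1})}{1 - t}. -/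
/-!
For fixed `i`, the factors indexed by `j > i` telescope twice: the `t`-part to
`(1 - t ^ (n - i)) / (1 - t)`, and the `tn * t0`-part to
`(1 - t ^ (2 * (n - 1 - i)) * tn * t0) / (1 - t ^ (n - 1 - i) * tn * t0)`, which cancels against
the `i`-th factor of the second product. What remains is the `(n - 1 - i)`-th factor of the
right-hand side.
-/

open Finset

section Telescoping

variable {K : Type*} [Field K] {f : ℕ → K} {m n : ℕ}

theorem Finset.prod_Ico_div_of_ne_zero (hmn : m ≤ n) (hf : ∀ k ∈ Icc m n, f k ≠ 0) :
    ∏ k ∈ Ico m n, f (k + 1) / f k = f n / f m := by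
  induction n, hmn using Nat.le_induction with
  | base => simp [div_self (hf m (by simp))]
  | succ n hmn ih =>
    have hn : f n ≠ 0 := hf n (by rw [mem_Icc]; omega)
    rw [prod_Ico_succ_top hmn, ih fun k hk => hf k (by rw [mem_Icc] at hk ⊢; omega)]
    field_simp

theorem Finset.prod_Ico_div_succ_of_ne_zero (hmn : m ≤ n) (hf : ∀ k ∈ Icc m n, f k ≠ 0) :
    ∏ k ∈ Ico m n, f k / f (k + 1) = f m / f n := by
  rw [← inv_div (f n), ← prod_Ico_div_of_ne_zero hmn hf, ← prod_inv_distrib]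
  simp only [inv_div]

end Telescoping

theorem Fin.prod_filter_lt_eq_prod_Ioo {M : Type*} [CommMonoid M] (n : ℕ) (f : ℕ → ℕ → M) :
    ∏ p ∈ univ.filter (fun p : Fin n × Fin n => p.1 < p.2), f p.1 p.2 =
      ∏ i : Fin n, ∏ j ∈ Ioo (i : ℕ) n, f i j := by
  rw [prod_finset_product _ univ (fun i => Ioi i) (by simp)]
  refine prod_congr rfl fun i _ => ?_
  rw [← Fin.map_valEmbedding_Ioi, prod_map]
  rfl

section Poincare

variable {K : Type*} [Field K]

theorem prod_Ioo_one_sub_pow_div (t : K) {i n : ℕ} (hin : i < n)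
    (ht : ∀ k, 0 < k → 1 - t ^ k ≠ 0) :
    ∏ j ∈ Ioo i n, (1 - t ^ (j - i + 1)) / (1 - t ^ (j - i)) = (1 - t ^ (n - i)) / (1 - t) := by
  calc _ = ∏ j ∈ Ico (i + 1) n, (1 - t ^ (j + 1 - i)) / (1 - t ^ (j - i)) := by
        rw [← Ico_add_one_left_eq_Ioo]
        refine prod_congr rfl fun j hj => ?_
        rw [Nat.sub_add_comm (Nat.le_of_succ_le (mem_Ico.1 hj).1)]
    _ = _ := by
        rw [prod_Ico_div_of_ne_zero (f := fun j => 1 - t ^ (j - i)) hin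
          fun k hk => ht _ (by rw [mem_Icc] at hk; omega)]
        simp

theorem prod_Ioo_one_sub_pow_mul_div (t c : K) {i n : ℕ} (hin : i < n)
    (hc : ∀ k, 1 - t ^ k * c ≠ 0) :
    ∏ j ∈ Ioo i n, (1 - t ^ (2 * n - 2 - i - j + 1) * c) / (1 - t ^ (2 * n - 2 - i - j) * c) =
      (1 - t ^ (2 * (n - 1 - i)) * c) / (1 - t ^ (n - 1 - i) * c) := by
  calc _ = ∏ j ∈ Ico (i + 1) n,
        (1 - t ^ (2 * n - 1 - i - j) * c) / (1 - t ^ (2 * n - 1 - i - (j + 1)) * c) := by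
        rw [← Ico_add_one_left_eq_Ioo]
        refine prod_congr rfl fun j hj => ?_
        simp only [mem_Ico] at hj
        congr 4 <;> omega
    _ = _ := by
        rw [prod_Ico_div_succ_of_ne_zero (f := fun j => 1 - t ^ (2 * n - 1 - i - j) * c) hin
          fun k _ => hc _]
        congr 4 <;> omega

end Poincare

/-- Telescoping identity for the principal evaluation of the normalized c-function:
∏_{i<j} [(1-t^{j-i+1})(1-t^{2n-j-i+1} t_n t_0)] / [(1-t^{j-i})(1-t^{2n-j-i} t_n t_0)]
· ∏_i (1-t_n t_0 t^{n-i})(1+t_n t^{n-i})/(1-t_0 t_n t^{2(n-i)})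
= ∏_{i=1}^n (1-t^i)(1+t_n t^{i-1})/(1-t),
written with 0-based indices (i, j range over Fin n). -/
theorem poincare_telescoping {K : Type*} [Field K] (n : ℕ) (t t0 tn : K)
    (h1 : ∀ k : ℕ, 0 < k → (1 : K) - t ^ k ≠ 0)
    (h2 : ∀ k : ℕ, (1 : K) - tn * t0 * t ^ k ≠ 0) :
    (∏ p ∈ (Finset.univ : Finset (Fin n × Fin n)).filter (fun p => p.1 < p.2),
        ((1 - t ^ (p.2.val - p.1.val + 1)) *
            (1 - t ^ (2 * n - 2 - p.1.val - p.2.val + 1) * tn * t0)) /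
          ((1 - t ^ (p.2.val - p.1.val)) *
            (1 - t ^ (2 * n - 2 - p.1.val - p.2.val) * tn * t0)))
      * (∏ i : Fin n,
          ((1 - tn * t0 * t ^ (n - 1 - i.val)) * (1 + tn * t ^ (n - 1 - i.val))) /
            (1 - t0 * tn * t ^ (2 * (n - 1 - i.val))))
    = ∏ i : Fin n, ((1 - t ^ (i.val + 1)) * (1 + tn * t ^ i.val)) / (1 - t) := by
  have hc : ∀ k, 1 - t ^ k * (tn * t0) ≠ 0 := fun k => by rw [mul_comm]; exact h2 k
  have ht : 1 - t ≠ 0 := by simpa using h1 1 one_pos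
  simp only [mul_assoc (t ^ _) tn t0]
  rw [Fin.prod_filter_lt_eq_prod_Ioo n fun i j => ((1 - t ^ (j - i + 1)) *
      (1 - t ^ (2 * n - 2 - i - j + 1) * (tn * t0))) /
        ((1 - t ^ (j - i)) * (1 - t ^ (2 * n - 2 - i - j) * (tn * t0))), ← prod_mul_distrib]
  conv_rhs => rw [← Equiv.prod_comp Fin.revPerm]
  refine prod_congr rfl fun i _ => ?_
  simp only [mul_div_mul_comm, prod_mul_distrib]
  rw [prod_Ioo_one_sub_pow_div t i.isLt h1, prod_Ioo_one_sub_pow_mul_div t _ i.isLt hc,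
    Fin.revPerm_apply, Fin.val_rev, show n - (i + 1) = n - 1 - i by omega,
    show n - i = n - 1 - i + 1 by omega]
  have hc' : 1 - t0 * tn * t ^ (2 * (n - 1 - i)) ≠ 0 := by
    rw [mul_comm t0]; exact h2 _
  rw [div_mul_div_comm, div_mul_div_comm,
    div_eq_div_iff (mul_ne_zero (mul_ne_zero ht (hc _)) hc') ht]
  ring
end
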